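/- arXiv:2207.06411 — 6 statements merged into one kernel-verified Lean document; each statement's English description precedes it below -/
import Mathlib

section
/- The three behavior thresholds satisfy the strict/weak ordering P_vs < P_n ≤ P_vu, where P_vs = f/(r·t + f), P_n = 1/(1+r), and P_vu = (1 - β·f)/(1 + r(1 - β·t) - β·f). Moreover, if β·t > 0 then P_n < P_vu strictly. -/
theorem stmt_1
    (r β t f : ℝ)
    (hr : 1 < r) (hβ : β ∈ Set.Icc (0:ℝ) 1)
    (hf : 0 ≤ f) (hft : f < t) (ht : t ≤ 1) (ht0 : 0 < t)
    (hden : 0 < 1 + r * (1 - β * t) - β * f) :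
    f / (r * t + f) < 1 / (1 + r) ∧
    1 / (1 + r) ≤ (1 - β * f) / (1 + r * (1 - β * t) - β * f) ∧
    (0 < β * t → 1 / (1 + r) < (1 - β * f) / (1 + r * (1 - β * t) - β * f)) := by
  obtain ⟨hβ0, hβ1⟩ := hβ
  have h1 : (0:ℝ) < 1 + r := by linarith
  have h2 : (0:ℝ) < r * t + f := by nlinarith
  refine ⟨?_, ?_, ?_⟩
  · rw [div_lt_div_iff₀ h2 h1]; nlinarith
  · rw [div_le_div_iff₀ h1 hden]
    nlinarith [mul_nonneg (by linarith : (0:ℝ) ≤ r) (mul_nonneg hβ0 (by linarith : (0:ℝ) ≤ t - f))]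
  · intro hβt
    have hβpos : 0 < β := by nlinarith
    rw [div_lt_div_iff₀ h1 hden]
    nlinarith [mul_pos (by linarith : (0:ℝ) < r) (mul_pos hβpos (by linarith : (0:ℝ) < t - f))]
end

section
/- The unsignaled threshold P_vu(β) = (1 - β·f)/(1 + r(1 - β·t) - β·f) is (weakly) increasing in β on [0,1]; it is strictly increasing when t > f ≥ 0 and r > 1. -/
theorem stmt_4
    (r t f : ℝ)
    (hr : 1 < r) (hf : 0 ≤ f) (hft : f < t) (ht : t ≤ 1)
    (hden : ∀ β ∈ Set.Icc (0:ℝ) 1, 0 < 1 + r * (1 - β * t) - β * f) :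
    MonotoneOn (fun β => (1 - β * f) / (1 + r * (1 - β * t) - β * f)) (Set.Icc (0:ℝ) 1) ∧
    StrictMonoOn (fun β => (1 - β * f) / (1 + r * (1 - β * t) - β * f)) (Set.Icc (0:ℝ) 1) := by
  have hs : StrictMonoOn (fun β => (1 - β * f) / (1 + r * (1 - β * t) - β * f)) (Set.Icc (0:ℝ) 1) := by
    intro a ha b hb hab
    have hda := hden a ha
    have hdb := hden b hb
    simp only
    rw [div_lt_div_iff₀ hda hdb]
    nlinarith [mul_pos (mul_pos (sub_pos.mpr hab) (sub_pos.mpr hft)) (show (0:ℝ) < r by linarith)]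
  exact ⟨hs.monotoneOn, hs⟩
end

section
/- Suppose for i = 1, 2 the quantity P_i > 0 satisfies the fixed-point equation P_i = p(1 - β_i·(P_i·(t - f) + f)·y), where β_1 < β_2 and y > 0. Then P_1 > P_2. -/
theorem stmt_6
    (p : ℝ → ℝ) (hpc : Continuous p) (hpm : StrictMono p)
    (y t f β₁ β₂ P₁ P₂ : ℝ)
    (hy : y ∈ Set.Ioc (0:ℝ) 1)
    (hf : 0 ≤ f) (hft : f < t) (ht : t ≤ 1)
    (hβ₁ : β₁ ∈ Set.Icc (0:ℝ) 1) (hβ₂ : β₂ ∈ Set.Icc (0:ℝ) 1)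
    (hββ : β₁ < β₂)
    (hP₁pos : 0 < P₁) (hP₂pos : 0 < P₂)
    (h1 : P₁ = p (1 - β₁ * (P₁ * (t - f) + f) * y))
    (h2 : P₂ = p (1 - β₂ * (P₂ * (t - f) + f) * y)) :
    P₁ > P₂ := by
  by_contra h
  push_neg at h
  obtain ⟨hy0, hy1⟩ := hy
  obtain ⟨hb1, _⟩ := hβ₁
  have key : β₁ * (P₁ * (t - f) + f) * y < β₂ * (P₂ * (t - f) + f) * y := by
    have hA : 0 < P₁ * (t - f) + f := by nlinarith
    have hAB : P₁ * (t - f) + f ≤ P₂ * (t - f) + f := by nlinarith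
    have h3 : β₁ * (P₁ * (t - f) + f) < β₂ * (P₂ * (t - f) + f) := by nlinarith [hβ₂.1]
    exact mul_lt_mul_of_pos_right h3 hy0
  have := hpm (show 1 - β₂ * (P₂ * (t - f) + f) * y < 1 - β₁ * (P₁ * (t - f) + f) * y by linarith)
  rw [← h1, ← h2] at this
  linarith
end

section
/- The function S(β) = r(1 - β·t)/(1 + r(1 - β·t) - β·f) is strictly decreasing in β on [0,1], provided r > 1, 0 ≤ f < t ≤ 1, t > 0, and the denominator remains positive. -/
theorem stmt_7
    (r t f : ℝ)
    (hr : 1 < r) (hf : 0 ≤ f) (hft : f < t) (ht : t ≤ 1) (ht0 : 0 < t)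
    (hden : ∀ β ∈ Set.Icc (0:ℝ) 1, 0 < 1 + r * (1 - β * t) - β * f) :
    StrictAntiOn (fun β => r * (1 - β * t) / (1 + r * (1 - β * t) - β * f))
      (Set.Icc (0:ℝ) 1) := by
  intro a ha b hb hab
  simp only
  rw [div_lt_div_iff₀ (hden b hb) (hden a ha)]
  nlinarith [mul_pos (mul_pos (show (0:ℝ) < r by linarith) (sub_pos.mpr hab)) (sub_pos.mpr hft)]
end

section
/- If β·t > 0, P ∈ (0,1), Q = β(P·t + (1-P)·f) ∈ (0,1), and the posterior given a signal equals the indifference point, i.e., P·β·t/Q = 1/(1+r), then P = f/(r·t + f); moreover in that case P < 1/(1+r) and P·(1 - β·t)/(1 - Q) < 1/(1+r), i.e., both non-V2V drivers and unsignaled V2V drivers strictly prefer recklessness. -/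
/-!
Cross-multiplying the indifference condition gives `P r t = (1 - P) f`, which solves to
`P = f / (r t + f)`, and this is below `1 / (1 + r)` exactly because `f < t`.
For the unsignaled drivers, the prior is the `Q`-weighted mix of the two posteriors
(law of total probability); since the signaled posterior `1 / (1 + r)` lies above the prior,
the unsignaled posterior lies below it.
-/

lemma mul_div_add_one_sub_mul_div {K : Type*} [Field K] {Q a b : K} (hQ0 : Q ≠ 0) (hQ1 : Q ≠ 1) :
    Q * (a / Q) + (1 - Q) * (b / (1 - Q)) = a + b := by
  rw [mul_div_cancel₀ _ hQ0, mul_div_cancel₀ _ (sub_ne_zero.mpr hQ1.symm)]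

lemma lt_of_convex_comb_eq_of_lt {K : Type*} [Field K] [LinearOrder K] [IsStrictOrderedRing K]
    {Q a b x : K} (hQ0 : 0 < Q) (hQ1 : Q < 1)
    (hmix : Q * a + (1 - Q) * b = x) (hxa : x < a) : b < x := by
  nlinarith

lemma mul_mul_eq_of_posterior_eq {r β t f P : ℝ} (hβ : β ≠ 0) (hr : 1 + r ≠ 0)
    (hQ : β * (P * t + (1 - P) * f) ≠ 0)
    (h : P * β * t / (β * (P * t + (1 - P) * f)) = 1 / (1 + r)) :
    P * r * t = (1 - P) * f := by
  rw [div_eq_div_iff hQ hr] at h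
  have hβcross : β * (P * r * t) = β * ((1 - P) * f) := by linear_combination h
  exact mul_left_cancel₀ hβ hβcross

lemma eq_div_of_mul_mul_eq {r t f P : ℝ} (hr : 0 < r) (ht : 0 < t) (hP : P ∈ Set.Ioo (0:ℝ) 1)
    (h : P * r * t = (1 - P) * f) : P = f / (r * t + f) := by
  obtain ⟨hP0, hP1⟩ := hP
  have hf : 0 < f := pos_of_mul_pos_right (h ▸ by positivity) (sub_pos.mpr hP1).le
  rw [eq_div_iff (by positivity)]
  linear_combination h

lemma lt_one_div_one_add_of_mul_mul_eq {r t f P : ℝ} (hr : 0 < r) (ht : 0 < t) (hft : f < t)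
    (hP1 : P < 1) (h : P * r * t = (1 - P) * f) : P < 1 / (1 + r) := by
  rw [lt_div_iff₀ (by linarith)]
  have hlt : P * r * t < (1 - P) * t := h ▸ mul_lt_mul_of_pos_left hft (sub_pos.mpr hP1)
  nlinarith

theorem stmt_9_general
    (r β t f P : ℝ)
    (hr : 1 < r) (hβ : β ∈ Set.Ioc (0:ℝ) 1)
    (hft : f < t) (ht0 : 0 < t)
    (hP : P ∈ Set.Ioo (0:ℝ) 1)
    (hQ : β * (P * t + (1 - P) * f) ∈ Set.Ioo (0:ℝ) 1)
    (hindiff : P * β * t / (β * (P * t + (1 - P) * f)) = 1 / (1 + r)) :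
    P = f / (r * t + f) ∧
    P < 1 / (1 + r) ∧
    P * (1 - β * t) / (1 - β * (P * t + (1 - P) * f)) < 1 / (1 + r) := by
  set Q := β * (P * t + (1 - P) * f)
  have hr0 : 0 < r := by linarith
  have hcross : P * r * t = (1 - P) * f :=
    mul_mul_eq_of_posterior_eq hβ.1.ne' (by linarith) hQ.1.ne' hindiff
  have hprior : P < 1 / (1 + r) := lt_one_div_one_add_of_mul_mul_eq hr0 ht0 hft hP.2 hcross
  have hmix : Q * (1 / (1 + r)) + (1 - Q) * (P * (1 - β * t) / (1 - Q)) = P := by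
    rw [← hindiff, mul_div_add_one_sub_mul_div hQ.1.ne' hQ.2.ne]
    ring
  refine ⟨eq_div_of_mul_mul_eq hr0 ht0 hP hcross, hprior, ?_⟩
  exact (lt_of_convex_comb_eq_of_lt hQ.1 hQ.2 hmix hprior).trans hprior

theorem stmt_9
    (r β t f P : ℝ)
    (hr : 1 < r) (hβ : β ∈ Set.Ioc (0:ℝ) 1)
    (hf : 0 ≤ f) (hft : f < t) (ht : t ≤ 1) (ht0 : 0 < t)
    (hβt : 0 < β * t)
    (hP : P ∈ Set.Ioo (0:ℝ) 1)
    (hQ : β * (P * t + (1 - P) * f) ∈ Set.Ioo (0:ℝ) 1)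
    (hindiff : P * β * t / (β * (P * t + (1 - P) * f)) = 1 / (1 + r)) :
    P = f / (r * t + f) ∧
    P < 1 / (1 + r) ∧
    P * (1 - β * t) / (1 - β * (P * t + (1 - P) * f)) < 1 / (1 + r) :=
  stmt_9_general r β t f P hr hβ hft ht0 hP hQ hindiff
end

section
/- If P ∈ (0,1), Q = β(Pt + (1-P)f), 0 < β·t, and P > P_vu = (1-βf)/(1+r(1-βt)-βf), then the posterior ℙ(A|¬S) = P(1-βt)/(1-Q) > 1/(1+r); consequently at equilibrium all unsignaled V2V drivers are careful (x_vu = 0), and since P_vu ≥ P_n, also P > 1/(1+r), so all non-V2V drivers are careful (x_n = 0). -/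
theorem stmt_19
    (r β t f P : ℝ)
    (hr : 1 < r) (hβ : β ∈ Set.Ioc (0:ℝ) 1)
    (hf : 0 ≤ f) (hft : f < t) (ht : t ≤ 1)
    (hβt : 0 < β * t)
    (hP : P ∈ Set.Ioo (0:ℝ) 1)
    (hQ : β * (P * t + (1 - P) * f) < 1)
    (hden : 0 < 1 + r * (1 - β * t) - β * f)
    (hPgt : P > (1 - β * f) / (1 + r * (1 - β * t) - β * f)) :
    P * (1 - β * t) / (1 - β * (P * t + (1 - P) * f)) > 1 / (1 + r) ∧
    P > 1 / (1 + r) := by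
  obtain ⟨hP0, hP1⟩ := hP
  obtain ⟨hβ0, hβ1⟩ := hβ
  have hr0 : (0:ℝ) < 1 + r := by linarith
  have hQ0 : 0 < 1 - β * (P * t + (1 - P) * f) := by linarith
  have hkey : P * (1 + r * (1 - β * t) - β * f) > 1 - β * f :=
    (div_lt_iff₀ hden).mp hPgt
  have hβf1 : β * f < 1 := by nlinarith
  constructor
  · rw [gt_iff_lt, div_lt_div_iff₀ hr0 hQ0]
    nlinarith [mul_pos hβ0 (sub_pos.mpr hft)]
  · rw [gt_iff_lt, div_lt_iff₀ hr0]
    nlinarith [mul_pos hβ0 (sub_pos.mpr hft), mul_pos hP0 (mul_pos hβ0 (sub_pos.mpr hft))]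
end
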